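/- Let θ_0, θ_1 be kernel mean embeddings of Gaussian measures N(μ_0, σ²I) and N(μ_1, σ²I) on ℝ^d for a translation invariant kernel k(x,y) = ψ(x−y) with ψ ∈ C_b(ℝ^d) positive definite and Bochner measure Λ_ψ. Then ⟨θ_0, θ_1⟩_{H_k} = (2π)^{−d/2} ∫_{ℝ^d} cos(⟨μ_0 − μ_1, w⟩) e^{−σ²‖w‖²} dΛ_ψ(w), and consequently ‖θ_0 − θ_1‖²_{H_k} = 2(2π)^{−d/2} ∫_{ℝ^d} e^{−σ²‖w‖²} (1 − cos(⟨μ_0 − μ_1, w⟩)) dΛ_ψ(w). -/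

import Mathlib

open MeasureTheory Complex
open scoped RealInnerProductSpace

/-!
Write the Bochner representation as ψ(x - y) = c ∫ e^{i⟨x,-w⟩} e^{i⟨y,w⟩} dΛ(w). By Fubini, the
double integral ∫∫ ψ(x - y) dG₀(x) dG₁(y) = ⟨θ₀, θ₁⟩ becomes c ∫ χ₀(-w) χ₁(w) dΛ(w), where χᵢ is
the characteristic function of Gᵢ. For N(μ, σ²I) one has χ(w) = e^{i⟨w,μ⟩ - σ²‖w‖²/2}, so the
integrand is e^{-i⟨μ₀ - μ₁, w⟩ - σ²‖w‖²}, whose real part gives the first formula. The second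
follows by expanding ‖θ₀ - θ₁‖² = ⟨θ₀, θ₀⟩ - 2⟨θ₀, θ₁⟩ + ⟨θ₁, θ₁⟩.
-/

section FeatureMap

variable {E H : Type*} [AddGroup E] [NormedAddCommGroup H] [InnerProductSpace ℝ H]
  {ψ : E → ℝ} {φ : E → H}

theorem norm_sub_sq_eq_of_inner_eq_comp_sub (hφ : ∀ x y, ⟪φ x, φ y⟫ = ψ (x - y)) (x y : E) :
    ‖φ x - φ y‖ ^ 2 = 2 * ψ 0 - 2 * ψ (x - y) := by
  rw [norm_sub_sq_real, ← real_inner_self_eq_norm_sq, ← real_inner_self_eq_norm_sq, hφ, hφ, hφ,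
    sub_self, sub_self]
  ring

theorem norm_eq_sqrt_of_inner_eq_comp_sub (hφ : ∀ x y, ⟪φ x, φ y⟫ = ψ (x - y)) (x : E) :
    ‖φ x‖ = √(ψ 0) := by
  rw [← Real.sqrt_sq (norm_nonneg _), ← real_inner_self_eq_norm_sq, hφ, sub_self]

theorem continuous_of_inner_eq_comp_sub [TopologicalSpace E] [ContinuousSub E]
    (hψ : ContinuousAt ψ 0) (hφ : ∀ x y, ⟪φ x, φ y⟫ = ψ (x - y)) : Continuous φ := by
  refine continuous_iff_continuousAt.mpr fun x => tendsto_iff_norm_sub_tendsto_zero.mpr ?_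
  have hsub : Filter.Tendsto (· - x) (nhds x) (nhds (0 : E)) :=
    (continuous_id.sub continuous_const).tendsto' x 0 (sub_self x)
  have hlim := ((hψ.tendsto.comp hsub).const_mul 2).const_sub (2 * ψ 0) |>.sqrt
  simp only [sub_self, Real.sqrt_zero] at hlim
  refine hlim.congr fun y => ?_
  rw [Function.comp_apply, ← norm_sub_sq_eq_of_inner_eq_comp_sub hφ, Real.sqrt_sq (norm_nonneg _)]

end FeatureMap

theorem inner_integral_eq_integral_integral_inner {X H : Type*} [MeasurableSpace X]
    [NormedAddCommGroup H] [InnerProductSpace ℝ H] [CompleteSpace H] {P Q : Measure X}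
    {φ : X → H} (hP : Integrable φ P) (hQ : Integrable φ Q) :
    ⟪∫ x, φ x ∂P, ∫ y, φ y ∂Q⟫ = ∫ x, ∫ y, ⟪φ x, φ y⟫ ∂Q ∂P := by
  rw [real_inner_comm, ← integral_inner hP]
  congr with x
  rw [real_inner_comm, integral_inner hQ]

section Fourier

variable {V : Type*} [NormedAddCommGroup V] [InnerProductSpace ℝ V] [MeasurableSpace V]
  {Λ : Measure V} {ψ : V → ℝ} {c : ℝ}

theorem ofReal_eq_mul_charFun_neg (hΛ : ∀ x, (ψ x : ℂ) = c * ∫ w, cexp (-(⟪x, w⟫ : ℂ) * I) ∂Λ)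
    (x : V) : (ψ x : ℂ) = c * charFun Λ (-x) := by
  simp [hΛ, charFun_apply, real_inner_comm]

theorem ofReal_sub_eq_mul_integral_exp_mul_exp
    (hΛ : ∀ x, (ψ x : ℂ) = c * ∫ w, cexp (-(⟪x, w⟫ : ℂ) * I) ∂Λ) (x y : V) :
    (ψ (x - y) : ℂ) = c * ∫ w, cexp (⟪x, -w⟫ * I) * cexp (⟪y, w⟫ * I) ∂Λ := by
  rw [hΛ]
  congr with w
  rw [← Complex.exp_add, inner_neg_right, inner_sub_left]
  push_cast
  ring_nf

variable [BorelSpace V] [SecondCountableTopology V] [IsFiniteMeasure Λ]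

theorem integrable_comp_sub_prod (hΛ : ∀ x, (ψ x : ℂ) = c * ∫ w, cexp (-(⟪x, w⟫ : ℂ) * I) ∂Λ)
    (P Q : Measure V) [IsFiniteMeasure P] [IsFiniteMeasure Q] :
    Integrable (fun p : V × V => ψ (p.1 - p.2)) (P.prod Q) := by
  have hψ := ofReal_eq_mul_charFun_neg hΛ
  have hψ_meas : Measurable ψ := by
    rw [show ψ = fun x => (c * charFun Λ (-x)).re from funext fun x => by rw [← hψ, ofReal_re]]
    fun_prop
  refine .of_bound (hψ_meas.comp (by fun_prop)).aestronglyMeasurable (|c| * Λ.real Set.univ)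
    (ae_of_all _ fun p => ?_)
  rw [← norm_real, hψ, norm_mul, norm_real, Real.norm_eq_abs]
  gcongr
  exact norm_charFun_le _

theorem integral_integral_sub_eq_integral_charFun_mul
    (hΛ : ∀ x, (ψ x : ℂ) = c * ∫ w, cexp (-(⟪x, w⟫ : ℂ) * I) ∂Λ)
    (P Q : Measure V) [IsFiniteMeasure P] [IsFiniteMeasure Q] :
    ((∫ x, ∫ y, ψ (x - y) ∂Q ∂P : ℝ) : ℂ) = c * ∫ w, charFun P (-w) * charFun Q w ∂Λ := by
  have hF_int : Integrable (Function.uncurry fun (p : V × V) (w : V) =>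
      cexp (⟪p.1, -w⟫ * I) * cexp (⟪p.2, w⟫ * I)) ((P.prod Q).prod Λ) := by
    refine .of_bound (by fun_prop) 1 (ae_of_all _ fun q => ?_)
    simp only [Function.uncurry, norm_mul, norm_exp_ofReal_mul_I, mul_one, le_refl]
  calc ((∫ x, ∫ y, ψ (x - y) ∂Q ∂P : ℝ) : ℂ)
      = ∫ p, (ψ (p.1 - p.2) : ℂ) ∂(P.prod Q) := by
        rw [← integral_prod _ (integrable_comp_sub_prod hΛ P Q)]
        exact integral_ofReal.symm
    _ = c * ∫ p, ∫ w, cexp (⟪p.1, -w⟫ * I) * cexp (⟪p.2, w⟫ * I) ∂Λ ∂(P.prod Q) := by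
        rw [← integral_const_mul]
        simp only [ofReal_sub_eq_mul_integral_exp_mul_exp hΛ]
    _ = c * ∫ w, charFun P (-w) * charFun Q w ∂Λ := by
        rw [integral_integral_swap hF_int]
        congr with w
        exact integral_prod_mul (fun x => cexp (⟪x, -w⟫ * I)) (fun y => cexp (⟪y, w⟫ * I))

theorem integral_integral_sub_eq_integral_re_charFun_mul
    (hΛ : ∀ x, (ψ x : ℂ) = c * ∫ w, cexp (-(⟪x, w⟫ : ℂ) * I) ∂Λ)
    (P Q : Measure V) [IsFiniteMeasure P] [IsFiniteMeasure Q] :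
    ∫ x, ∫ y, ψ (x - y) ∂Q ∂P = c * ∫ w, (charFun P (-w) * charFun Q w).re ∂Λ := by
  have hchar_int : Integrable (fun w => charFun P (-w) * charFun Q w) Λ := by
    refine .of_bound (by fun_prop) (P.real Set.univ * Q.real Set.univ) (ae_of_all _ fun w => ?_)
    rw [norm_mul]
    exact mul_le_mul (norm_charFun_le _) (norm_charFun_le _) (norm_nonneg _) measureReal_nonneg
  calc ∫ x, ∫ y, ψ (x - y) ∂Q ∂P
      = (c * ∫ w, charFun P (-w) * charFun Q w ∂Λ).re := by
        rw [← integral_integral_sub_eq_integral_charFun_mul hΛ, ofReal_re]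
    _ = c * ∫ w, (charFun P (-w) * charFun Q w).re ∂Λ := by
        rw [re_ofReal_mul]
        exact congrArg (c * ·) (integral_re hchar_int).symm

end Fourier

section Gaussian

variable {V : Type*} [NormedAddCommGroup V] [InnerProductSpace ℝ V] [FiniteDimensional ℝ V]
  [MeasurableSpace V] [BorelSpace V]

noncomputable def isotropicGaussian (μ : V) (σ : ℝ) : Measure V :=
  volume.withDensity fun x => ENNReal.ofReal
    ((2 * Real.pi * σ ^ 2) ^ (-(Module.finrank ℝ V : ℝ) / 2) *
      Real.exp (-‖x - μ‖ ^ 2 / (2 * σ ^ 2)))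

theorem ofReal_rpow_neg_half_mul_cpow_half {σ : ℝ} (hσ : 0 < σ) (n : ℕ) :
    (((2 * Real.pi * σ ^ 2) ^ (-(n : ℝ) / 2) : ℝ) : ℂ) *
      ((Real.pi : ℂ) / ((1 / (2 * σ ^ 2) : ℝ) : ℂ)) ^ ((n : ℂ) / 2) = 1 := by
  have hvar : 0 < 2 * Real.pi * σ ^ 2 := by positivity
  rw [← ofReal_div, show Real.pi / (1 / (2 * σ ^ 2)) = 2 * Real.pi * σ ^ 2 by field_simp,
    show (n : ℂ) / 2 = ((n / 2 : ℝ) : ℂ) by push_cast; rfl, ← ofReal_cpow hvar.le, ← ofReal_mul,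
    ← Real.rpow_add hvar, neg_div, neg_add_cancel, Real.rpow_zero, ofReal_one]

theorem charFun_isotropicGaussian {σ : ℝ} (hσ : 0 < σ) (μ w : V) :
    charFun (isotropicGaussian μ σ) w = cexp (⟪w, μ⟫ * I - (σ ^ 2 * ‖w‖ ^ 2 / 2 : ℝ)) := by
  rw [charFun_apply, isotropicGaussian, integral_withDensity_eq_integral_toReal_smul
      (by fun_prop) (ae_of_all _ fun _ => ENNReal.ofReal_lt_top)]
  set N : ℝ := (2 * Real.pi * σ ^ 2) ^ (-(Module.finrank ℝ V : ℝ) / 2)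
  set b : ℂ := ((1 / (2 * σ ^ 2) : ℝ) : ℂ)
  have hb : 0 < b.re := by simp only [b, ofReal_re]; positivity
  have hshift (v : V) :
      (ENNReal.ofReal (N * Real.exp (-‖v + μ - μ‖ ^ 2 / (2 * σ ^ 2)))).toReal •
        cexp (⟪v + μ, w⟫ * I) = (N * cexp (⟪μ, w⟫ * I)) * cexp (-b * ‖v‖ ^ 2 + I * ⟪w, v⟫) := by
    rw [ENNReal.toReal_ofReal (by positivity), add_sub_cancel_right, inner_add_left,
      real_inner_comm w v, real_smul]
    push_cast [b]
    rw [mul_assoc, mul_assoc, ← Complex.exp_add, ← Complex.exp_add]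
    ring_nf
  have hexp : I ^ 2 * (‖w‖ : ℂ) ^ 2 / (4 * b) = -(σ ^ 2 * ‖w‖ ^ 2 / 2 : ℝ) := by
    have : (σ : ℂ) ≠ 0 := by exact_mod_cast hσ.ne'
    push_cast [b]
    field_simp
    linear_combination (4 * (‖w‖ : ℂ) ^ 2) * I_sq
  rw [← integral_add_right_eq_self _ μ]
  simp only [hshift]
  rw [integral_const_mul, GaussianFourier.integral_cexp_neg_mul_sq_norm_add hb, hexp,
    real_inner_comm, sub_eq_add_neg, Complex.exp_add]
  linear_combination (cexp (⟪w, μ⟫ * I) * cexp (-(σ ^ 2 * ‖w‖ ^ 2 / 2 : ℝ))) *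
    ofReal_rpow_neg_half_mul_cpow_half hσ (Module.finrank ℝ V)

theorem isProbabilityMeasure_isotropicGaussian {σ : ℝ} (hσ : 0 < σ) (μ : V) :
    IsProbabilityMeasure (isotropicGaussian μ σ) := by
  have h := charFun_isotropicGaussian hσ μ 0
  simp only [charFun_zero, inner_zero_left, norm_zero] at h
  norm_num at h
  exact ⟨by rwa [measureReal_def, ENNReal.toReal_eq_one_iff] at h⟩

theorem re_charFun_isotropicGaussian_neg_mul {σ : ℝ} (hσ : 0 < σ) (μa μb w : V) :
    (charFun (isotropicGaussian μa σ) (-w) * charFun (isotropicGaussian μb σ) w).re =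
      Real.cos ⟪μa - μb, w⟫ * Real.exp (-(σ ^ 2 * ‖w‖ ^ 2)) := by
  have harg : (⟪-w, μa⟫ * I - (σ ^ 2 * ‖w‖ ^ 2 / 2 : ℝ)) +
      (⟪w, μb⟫ * I - (σ ^ 2 * ‖w‖ ^ 2 / 2 : ℝ)) =
        (-(σ ^ 2 * ‖w‖ ^ 2) : ℝ) + (-⟪μa - μb, w⟫ : ℝ) * I := by
    rw [inner_neg_left, inner_sub_left, real_inner_comm w μa, real_inner_comm w μb]
    push_cast
    ring
  rw [charFun_isotropicGaussian hσ, charFun_isotropicGaussian hσ, norm_neg, ← Complex.exp_add,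
    harg, Complex.exp_add, ← ofReal_exp, re_ofReal_mul, exp_ofReal_mul_I_re, Real.cos_neg, mul_comm]

variable {H : Type*} [NormedAddCommGroup H] [InnerProductSpace ℝ H] [CompleteSpace H]
  {ψ : V → ℝ} {φ : V → H} {Λ : Measure V} [IsFiniteMeasure Λ] {c σ : ℝ}

theorem inner_integral_isotropicGaussian (hψ : ContinuousAt ψ 0)
    (hΛ : ∀ x, (ψ x : ℂ) = c * ∫ w, cexp (-(⟪x, w⟫ : ℂ) * I) ∂Λ)
    (hφ : ∀ x y, ⟪φ x, φ y⟫ = ψ (x - y)) (hσ : 0 < σ) (μa μb : V) :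
    ⟪∫ x, φ x ∂isotropicGaussian μa σ, ∫ x, φ x ∂isotropicGaussian μb σ⟫ =
      c * ∫ w, Real.cos ⟪μa - μb, w⟫ * Real.exp (-(σ ^ 2 * ‖w‖ ^ 2)) ∂Λ := by
  have := isProbabilityMeasure_isotropicGaussian hσ μa
  have := isProbabilityMeasure_isotropicGaussian hσ μb
  have hint (P : Measure V) [IsFiniteMeasure P] : Integrable φ P :=
    .of_bound (continuous_of_inner_eq_comp_sub hψ hφ).aestronglyMeasurable √(ψ 0)
      (ae_of_all _ fun x => (norm_eq_sqrt_of_inner_eq_comp_sub hφ x).le)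
  simp only [inner_integral_eq_integral_integral_inner (hint _) (hint _), hφ,
    integral_integral_sub_eq_integral_re_charFun_mul hΛ,
    re_charFun_isotropicGaussian_neg_mul hσ]

theorem norm_sub_integral_isotropicGaussian_sq (hψ : ContinuousAt ψ 0)
    (hΛ : ∀ x, (ψ x : ℂ) = c * ∫ w, cexp (-(⟪x, w⟫ : ℂ) * I) ∂Λ)
    (hφ : ∀ x y, ⟪φ x, φ y⟫ = ψ (x - y)) (hσ : 0 < σ) (μa μb : V) :
    ‖(∫ x, φ x ∂isotropicGaussian μa σ) - ∫ x, φ x ∂isotropicGaussian μb σ‖ ^ 2 =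
      2 * c * ∫ w, Real.exp (-(σ ^ 2 * ‖w‖ ^ 2)) * (1 - Real.cos ⟪μa - μb, w⟫) ∂Λ := by
  have hexp_int : Integrable (fun w : V => Real.exp (-(σ ^ 2 * ‖w‖ ^ 2))) Λ := by
    refine .of_bound (by fun_prop) 1 (ae_of_all _ fun w => ?_)
    rw [Real.norm_eq_abs, Real.abs_exp, Real.exp_le_one_iff, neg_nonpos]
    positivity
  have hcos_int : Integrable (fun w => Real.cos ⟪μa - μb, w⟫ * Real.exp (-(σ ^ 2 * ‖w‖ ^ 2))) Λ :=
    hexp_int.bdd_mul (by fun_prop) (ae_of_all _ fun w => Real.abs_cos_le_one _)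
  have hsplit : ∫ w, Real.exp (-(σ ^ 2 * ‖w‖ ^ 2)) * (1 - Real.cos ⟪μa - μb, w⟫) ∂Λ =
      (∫ w, Real.exp (-(σ ^ 2 * ‖w‖ ^ 2)) ∂Λ) -
        ∫ w, Real.cos ⟪μa - μb, w⟫ * Real.exp (-(σ ^ 2 * ‖w‖ ^ 2)) ∂Λ := by
    rw [← integral_sub hexp_int hcos_int]
    congr with w
    ring
  rw [norm_sub_sq_real, ← real_inner_self_eq_norm_sq, ← real_inner_self_eq_norm_sq, hsplit]
  simp only [inner_integral_isotropicGaussian hψ hΛ hφ hσ, sub_self, inner_zero_left,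
    Real.cos_zero, one_mul]
  ring

end Gaussian

theorem rkhs_gaussian_embeddings_translation_invariant_general (d : ℕ)
    (ψ : EuclideanSpace ℝ (Fin d) → ℝ)
    (hψcont : Continuous ψ)
    (Λ : Measure (EuclideanSpace ℝ (Fin d))) [IsFiniteMeasure Λ]
    (hΛ : ∀ x, (ψ x : ℂ) =
      ((2 * Real.pi) ^ (-(d : ℝ) / 2) : ℝ) *
        ∫ w, Complex.exp (-(@inner ℝ _ _ x w : ℝ) * Complex.I) ∂Λ)
    (H : Type*) [NormedAddCommGroup H] [InnerProductSpace ℝ H] [CompleteSpace H]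
    (φ : EuclideanSpace ℝ (Fin d) → H)
    (hφ : ∀ x y, @inner ℝ _ _ (φ x) (φ y) = ψ (x - y))
    (μ₀ μ₁ : EuclideanSpace ℝ (Fin d)) (σ : ℝ) (hσ : 0 < σ)
    (G₀ G₁ : Measure (EuclideanSpace ℝ (Fin d)))
    (hG₀ : G₀ = (volume : Measure (EuclideanSpace ℝ (Fin d))).withDensity
      (fun x => ENNReal.ofReal ((2 * Real.pi * σ ^ 2) ^ (-(d : ℝ) / 2) *
        Real.exp (-‖x - μ₀‖ ^ 2 / (2 * σ ^ 2)))))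
    (hG₁ : G₁ = (volume : Measure (EuclideanSpace ℝ (Fin d))).withDensity
      (fun x => ENNReal.ofReal ((2 * Real.pi * σ ^ 2) ^ (-(d : ℝ) / 2) *
        Real.exp (-‖x - μ₁‖ ^ 2 / (2 * σ ^ 2))))) :
    @inner ℝ _ _ (∫ x, φ x ∂G₀) (∫ x, φ x ∂G₁) =
      (2 * Real.pi) ^ (-(d : ℝ) / 2) *
        ∫ w, Real.cos (@inner ℝ _ _ (μ₀ - μ₁) w) *
          Real.exp (-(σ ^ 2 * ‖w‖ ^ 2)) ∂Λ ∧
    ‖(∫ x, φ x ∂G₀) - ∫ x, φ x ∂G₁‖ ^ 2 =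
      2 * (2 * Real.pi) ^ (-(d : ℝ) / 2) *
        ∫ w, Real.exp (-(σ ^ 2 * ‖w‖ ^ 2)) *
          (1 - Real.cos (@inner ℝ _ _ (μ₀ - μ₁) w)) ∂Λ := by
  have hG (μ : EuclideanSpace ℝ (Fin d)) : isotropicGaussian μ σ =
      volume.withDensity fun x => ENNReal.ofReal ((2 * Real.pi * σ ^ 2) ^ (-(d : ℝ) / 2) *
        Real.exp (-‖x - μ‖ ^ 2 / (2 * σ ^ 2))) := by
    rw [isotropicGaussian, finrank_euclideanSpace_fin]
  rw [hG₀, hG₁, ← hG, ← hG]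
  exact ⟨inner_integral_isotropicGaussian hψcont.continuousAt hΛ hφ hσ μ₀ μ₁,
    norm_sub_integral_isotropicGaussian_sq hψcont.continuousAt hΛ hφ hσ μ₀ μ₁⟩

/-- For a translation invariant kernel k(x,y) = ψ(x-y) with ψ ∈ C_b(ℝ^d)
positive definite and (symmetric) Bochner measure Λ_ψ, the inner product of
the kernel mean embeddings of N(μ₀,σ²I) and N(μ₁,σ²I) is
(2π)^{-d/2} ∫ cos⟨μ₀-μ₁,w⟩ e^{-σ²‖w‖²} dΛ_ψ(w), and consequently the squared
RKHS distance is 2(2π)^{-d/2} ∫ e^{-σ²‖w‖²}(1 - cos⟨μ₀-μ₁,w⟩) dΛ_ψ(w). -/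
theorem rkhs_gaussian_embeddings_translation_invariant (d : ℕ)
    (ψ : EuclideanSpace ℝ (Fin d) → ℝ)
    (hψcont : Continuous ψ) (hψbdd : ∃ C, ∀ z, |ψ z| ≤ C)
    (Λ : Measure (EuclideanSpace ℝ (Fin d))) [IsFiniteMeasure Λ]
    (hΛsymm : Λ.map (fun w => -w) = Λ)
    (hΛ : ∀ x, (ψ x : ℂ) =
      ((2 * Real.pi) ^ (-(d : ℝ) / 2) : ℝ) *
        ∫ w, Complex.exp (-(@inner ℝ _ _ x w : ℝ) * Complex.I) ∂Λ)
    (H : Type*) [NormedAddCommGroup H] [InnerProductSpace ℝ H] [CompleteSpace H]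
    (φ : EuclideanSpace ℝ (Fin d) → H)
    (hφ : ∀ x y, @inner ℝ _ _ (φ x) (φ y) = ψ (x - y))
    (μ₀ μ₁ : EuclideanSpace ℝ (Fin d)) (σ : ℝ) (hσ : 0 < σ)
    (G₀ G₁ : Measure (EuclideanSpace ℝ (Fin d)))
    (hG₀ : G₀ = (volume : Measure (EuclideanSpace ℝ (Fin d))).withDensity
      (fun x => ENNReal.ofReal ((2 * Real.pi * σ ^ 2) ^ (-(d : ℝ) / 2) *
        Real.exp (-‖x - μ₀‖ ^ 2 / (2 * σ ^ 2)))))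
    (hG₁ : G₁ = (volume : Measure (EuclideanSpace ℝ (Fin d))).withDensity
      (fun x => ENNReal.ofReal ((2 * Real.pi * σ ^ 2) ^ (-(d : ℝ) / 2) *
        Real.exp (-‖x - μ₁‖ ^ 2 / (2 * σ ^ 2))))) :
    @inner ℝ _ _ (∫ x, φ x ∂G₀) (∫ x, φ x ∂G₁) =
      (2 * Real.pi) ^ (-(d : ℝ) / 2) *
        ∫ w, Real.cos (@inner ℝ _ _ (μ₀ - μ₁) w) *
          Real.exp (-(σ ^ 2 * ‖w‖ ^ 2)) ∂Λ ∧
    ‖(∫ x, φ x ∂G₀) - ∫ x, φ x ∂G₁‖ ^ 2 =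
      2 * (2 * Real.pi) ^ (-(d : ℝ) / 2) *
        ∫ w, Real.exp (-(σ ^ 2 * ‖w‖ ^ 2)) *
          (1 - Real.cos (@inner ℝ _ _ (μ₀ - μ₁) w)) ∂Λ :=
  rkhs_gaussian_embeddings_translation_invariant_general d ψ hψcont Λ hΛ H φ hφ μ₀ μ₁ σ hσ G₀ G₁ hG₀
    hG₁
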